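/- arXiv:1101.2705 — 2 statements merged into one kernel-verified Lean document; each statement's English description precedes it below -/
import Mathlib

section
/- Every thrifty deterministic k-way branching program that computes DE^G_k correctly on all inputs in D_{G,k} (the 'hard inputs') has at least k^p states, where p is the black pebbling cost of the connected rooted dag G with at least two nodes. -/
/-- A deterministic `k`-way branching program with variables `Var` and outputs `Out`.
States are either query states (labeled by `query`, with `k` out-edges given by `next`)
or output states (where `out` is `some o`). -/
structure BP (Var : Type) (k : ℕ) (Out : Type) where
  State : Type
  [finState : Fintype State]
  start : State
  query : State → Var
  next : State → Fin k → State
  out : State → Option Out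

namespace BP

variable {Var Out : Type} {k : ℕ}

/-- The number of states. -/
noncomputable def size (B : BP Var k Out) : ℕ := @Fintype.card B.State B.finState

/-- The computation path of input `I`. -/
def path (B : BP Var k Out) (I : Var → Fin k) : ℕ → B.State
  | 0 => B.start
  | t + 1 => B.next (B.path I t) (I (B.query (B.path I t)))

/-- The computation of `I` is still running at time `t`: no output state was reached earlier. -/
def VisitsAt (B : BP Var k Out) (I : Var → Fin k) (t : ℕ) : Prop :=
  ∀ s < t, B.out (B.path I s) = none

/-- State `q` is on the computation path of input `I`. -/
def Visits (B : BP Var k Out) (I : Var → Fin k) (q : B.State) : Prop :=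
  ∃ t, B.VisitsAt I t ∧ B.path I t = q

/-- `B` computes the function `g`. -/
def Computes (B : BP Var k Out) (g : (Var → Fin k) → Out) : Prop :=
  ∀ I, ∃ t, B.VisitsAt I t ∧ B.out (B.path I t) = some (g I)

end BP
/-- A single black-pebbling move with respect to a child relation: either place a pebble on a
node all of whose children are pebbled, simultaneously removing the pebbles from some set `S`
of its children, or remove a pebble from some node. -/
def PebMove {α : Type} [DecidableEq α] (child : α → α → Prop) (C C' : Finset α) : Prop :=
  (∃ (u : α) (S : Finset α), (∀ v, child v u → v ∈ C) ∧ (∀ v ∈ S, child v u) ∧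
      C' = insert u (C \ S)) ∨
  (∃ u : α, C' = C.erase u)

/-- `f 0, …, f T` is a complete black pebbling sequence: it starts with no pebbles, ends with the
root pebbled, and each step is a valid move (or leaves the configuration unchanged). -/
def IsCompletePebbling {α : Type} [DecidableEq α] (child : α → α → Prop) (root : α)
    (f : ℕ → Finset α) (T : ℕ) : Prop :=
  f 0 = ∅ ∧ root ∈ f T ∧ ∀ t < T, PebMove child (f t) (f (t + 1)) ∨ f (t + 1) = f t

/-- The black pebbling cost: the least `p` such that some complete pebbling sequence never has
more than `p` pebbles on the dag simultaneously. -/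
noncomputable def pebCost (α : Type) [DecidableEq α] (child : α → α → Prop) (root : α) : ℕ :=
  sInf {p | ∃ f T, IsCompletePebbling child root f T ∧ ∀ t ≤ T, (f t).card ≤ p}
/-- A connected rooted dag: nodes `Fin n`, with `child v u` meaning there is an arc from `v`
to `u` (so `v` is a child of `u`).  The relation is well-founded (the dag is acyclic), the
root is the unique node of out-degree `0` (every other node has a parent, which also makes
the dag connected). -/
structure RootedDag where
  n : ℕ
  child : Fin n → Fin n → Prop
  wf : WellFounded child
  root : Fin n
  root_no_parent : ∀ u, ¬ child root u
  root_unique : ∀ u, u ≠ root → ∃ w, child u w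

namespace RootedDag

/-- A leaf is a node of in-degree `0`. -/
def IsLeaf (G : RootedDag) (u : Fin G.n) : Prop := ∀ v, ¬ G.child v u

/-- The input variables of the dag evaluation problem `DE^G_k`: a leaf variable `l_u` for each
leaf `u`, and a variable `f_u(a⃗)` for each internal node `u` and each assignment `a⃗` of values
in `[k]` to the children of `u`. -/
def Var (G : RootedDag) (k : ℕ) : Type :=
  {u : Fin G.n // G.IsLeaf u} ⊕
    (Σ _u : {u : Fin G.n // ¬ G.IsLeaf u}, ({v : Fin G.n // G.child v _u.1} → Fin k))

/-- The value of each node of `G` under input `I`: leaves take their `l` value, and an internal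
node applies its function to the values of its children. -/
noncomputable def val (G : RootedDag) {k : ℕ} (I : G.Var k → Fin k) : Fin G.n → Fin k :=
  WellFounded.fix (C := fun _ => Fin k) G.wf fun u ih =>
    letI := Classical.dec (G.IsLeaf u)
    if h : G.IsLeaf u then I (Sum.inl ⟨u, h⟩)
    else I (Sum.inr ⟨⟨u, h⟩, fun v => ih v.1 v.2⟩)

/-- `B` solves `DE^G_k`: on every input it halts with output `true` iff the value of the
root is `1` (the first element of `[k]`). -/
def SolvesDE (G : RootedDag) {k : ℕ} (hk : 0 < k) (B : BP (G.Var k) k Bool) : Prop :=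
  B.Computes fun I => decide (G.val I G.root = ⟨0, hk⟩)

/-- `B` is thrifty: whenever a state querying `f_u(a⃗)` is visited by input `I`, then `a⃗` is
exactly the tuple of values of the children of `u` under `I`. -/
def Thrifty (G : RootedDag) {k : ℕ} (B : BP (G.Var k) k Bool) : Prop :=
  ∀ (I : G.Var k → Fin k) (q : B.State) (u : {u : Fin G.n // ¬ G.IsLeaf u})
    (a : {v : Fin G.n // G.child v u.1} → Fin k),
    B.Visits I q → B.query q = Sum.inr ⟨u, a⟩ → ∀ v, a v = G.val I v.1

end RootedDag

/-- The hard inputs `D_{G,k}`: inputs `I` such that every internal function `f_u^I` outputs `1`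
(the first element of `[k]`) except possibly on the tuple of the actual values of the
children of `u` under `I`. -/
def RootedDag.HardInputs (G : RootedDag) {k : ℕ} (hk : 0 < k) : Set (G.Var k → Fin k) :=
  {I | ∀ (u : {u : Fin G.n // ¬ G.IsLeaf u}) (a : {v : Fin G.n // G.child v u.1} → Fin k),
    a ≠ (fun v => G.val I v.1) → I (Sum.inr ⟨u, a⟩) = ⟨0, hk⟩}

/-- `B` computes `DE^G_k` correctly on every input in the set `S` (behavior elsewhere is
unconstrained). -/
def RootedDag.SolvesDEOn (G : RootedDag) {k : ℕ} (hk : 0 < k)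
    (B : BP (G.Var k) k Bool) (S : Set (G.Var k → Fin k)) : Prop :=
  ∀ I ∈ S, ∃ t, B.VisitsAt I t ∧
    B.out (B.path I t) = some (decide (G.val I G.root = ⟨0, hk⟩))

/-!
For a labeling `ν` of the nodes by `[k]`, let `I_ν` be the hard input with node values `ν` whose
function `f_u` returns `1` off the true tuple of children values. Thriftiness forces the run of the
program on `I_ν` to read every child before querying a parent, and correctness forces it to read
the root. Putting a pebble at time `t` on each node whose value a later query of a parent needs
before the node is read again turns the run into a black pebbling, so at some critical time before
the root is read at least `p` pebbles are down. The state at that time, together with the values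
of the other (at most `n - p`) nodes listed in the order in which they are first read afterwards,
determines `ν`: replaying the run from that state, every value read is either recorded in the tuple
of an earlier query (pebbled nodes) or the next entry of the list. Hence
`k ^ n ≤ |B| * k ^ (n - p)`.
-/

open Classical Relation Function

namespace BP

variable {Var Out : Type} {k : ℕ} {B : BP Var k Out} {I : Var → Fin k}

theorem path_succ (B : BP Var k Out) (I : Var → Fin k) (t : ℕ) :
    B.path I (t + 1) = B.next (B.path I t) (I (B.query (B.path I t))) := rfl

theorem VisitsAt.mono {t s : ℕ} (h : B.VisitsAt I t) (hs : s ≤ t) : B.VisitsAt I s :=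
  fun r hr => h r (hr.trans_le hs)

theorem eq_of_visitsAt_of_out_eq_some {t t' : ℕ} {o o' : Out}
    (h : B.VisitsAt I t) (ho : B.out (B.path I t) = some o)
    (h' : B.VisitsAt I t') (ho' : B.out (B.path I t') = some o') : t = t' := by
  by_contra hne
  rcases Nat.lt_or_gt_of_ne hne with hlt | hlt
  · simp [h' t hlt] at ho
  · simp [h t' hlt] at ho'

section Update

variable [DecidableEq Var] {x : Var} {y : Fin k} {t : ℕ}

theorem path_update_of_forall_ne (h : ∀ s < t, B.query (B.path I s) ≠ x) :
    ∀ s ≤ t, B.path (update I x y) s = B.path I s := by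
  intro s hs
  induction s with
  | zero => rfl
  | succ s ih =>
    rw [path_succ, path_succ, ih (by omega), update_of_ne (h s (by omega))]

theorem VisitsAt.update_of_forall_ne (h : ∀ s < t, B.query (B.path I s) ≠ x)
    (hv : B.VisitsAt I t) : B.VisitsAt (update I x y) t := fun s hs => by
  rw [path_update_of_forall_ne h s hs.le]
  exact hv s hs

end Update

end BP

section Pebbling

variable {α : Type} [DecidableEq α] (child : α → α → Prop) (M : ℕ)

def BoundedPebMove (C C' : Finset α) : Prop := PebMove child C C' ∧ C'.card ≤ M

variable {child M}

theorem exists_pebbling_of_reflTransGen {C₀ C : Finset α}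
    (h : ReflTransGen (BoundedPebMove child M) C₀ C) (h₀ : C₀.card ≤ M) :
    ∃ (f : ℕ → Finset α) (T : ℕ), f 0 = C₀ ∧ f T = C ∧
      (∀ t < T, PebMove child (f t) (f (t + 1)) ∨ f (t + 1) = f t) ∧ ∀ t ≤ T, (f t).card ≤ M := by
  induction h with
  | refl => exact ⟨fun _ => C₀, 0, rfl, rfl, by simp, fun _ _ => h₀⟩
  | @tail C C' _ hmove ih =>
    obtain ⟨f, T, hf0, hfT, hmoves, hcard⟩ := ih
    refine ⟨fun t => if t ≤ T then f t else C', T + 1, by simp [hf0], by simp, ?_, ?_⟩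
    · intro t ht
      rcases Nat.lt_or_ge t T with htT | htT
      · simpa [htT.le, Nat.succ_le_of_lt htT] using hmoves t htT
      · obtain rfl : t = T := by omega
        simpa [hfT] using Or.inl hmove.1
    · intro t _
      dsimp only
      split_ifs with htT
      exacts [hcard t htT, hmove.2]

theorem reflTransGen_boundedPebMove_of_subset {C C' : Finset α} (hC : C.card ≤ M)
    (h : C' ⊆ C) : ReflTransGen (BoundedPebMove child M) C C' := by
  suffices ∀ D : Finset α, ReflTransGen (BoundedPebMove child M) C (C \ D) by
    simpa [Finset.sdiff_sdiff_eq_self h] using this (C \ C')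
  intro D
  induction D using Finset.induction_on with
  | empty => simpa using ReflTransGen.refl
  | insert a D _ ih =>
    rw [Finset.sdiff_insert]
    refine ih.tail ⟨Or.inr ⟨a, rfl⟩, le_trans (Finset.card_le_card ?_) hC⟩
    exact (Finset.erase_subset _ _).trans Finset.sdiff_subset

theorem pebCost_le_of_moves (root : α) (g : ℕ → Finset α) (N : ℕ) (h0 : g 0 = ∅)
    (hroot : root ∈ g N)
    (hstep : ∀ t < N, PebMove child (g t) (g (t + 1)) ∨ g (t + 1) ⊆ g t)
    (hcard : ∀ t ≤ N, (g t).card ≤ M) :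
    pebCost α child root ≤ M := by
  have hreach : ∀ t ≤ N, ReflTransGen (BoundedPebMove child M) (g 0) (g t) := by
    intro t ht
    induction t with
    | zero => exact .refl
    | succ t ih =>
      refine (ih (by omega)).trans ?_
      rcases hstep t (by omega) with hmove | hsub
      · exact .single ⟨hmove, hcard _ ht⟩
      · exact reflTransGen_boundedPebMove_of_subset (hcard t (by omega)) hsub
  obtain ⟨f, T, hf0, hfT, hmoves, hfcard⟩ :=
    exists_pebbling_of_reflTransGen (hreach N le_rfl) (hcard 0 (Nat.zero_le _))
  exact Nat.sInf_le ⟨f, T, ⟨hf0.trans h0, hfT ▸ hroot, hmoves⟩, hfcard⟩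

end Pebbling

namespace RootedDag

variable (G : RootedDag)

theorem not_child_of_reflTransGen {v w : Fin G.n} (h : ReflTransGen G.child v w) :
    ¬ G.child w v :=
  fun hwv => G.wf.transGen.irrefl.irrefl v (TransGen.tail' h hwv)

theorem child_irrefl (v : Fin G.n) : ¬ G.child v v :=
  G.not_child_of_reflTransGen .refl

theorem reflTransGen_child_root (u : Fin G.n) : ReflTransGen G.child u G.root := by
  have : Std.Irrefl (TransGen (swap G.child)) :=
    ⟨fun a h => G.wf.transGen.irrefl.irrefl a (transGen_swap.mp h)⟩
  have hwf : WellFounded (swap G.child) :=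
    Subrelation.wf TransGen.single (Finite.wellFounded_of_trans_of_irrefl _)
  induction u using hwf.induction with
  | _ u ih =>
    by_cases hu : u = G.root
    · exact hu ▸ .refl
    · obtain ⟨w, hw⟩ := G.root_unique u hu
      exact .head hw (ih w hw)

theorem exists_child_root (hn : 2 ≤ G.n) : ∃ v, G.child v G.root := by
  obtain ⟨u, hu⟩ := Fintype.exists_ne_of_one_lt_card (by simp; omega) G.root
  rcases (G.reflTransGen_child_root u).cases_tail with h | ⟨v, _, hv⟩
  · exact absurd h.symm hu
  · exact ⟨v, hv⟩

variable {G} {k : ℕ}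

def nodeOf : G.Var k → Fin G.n
  | .inl u => u.1
  | .inr q => q.1.1

theorem val_eq (I : G.Var k → Fin k) (u : Fin G.n) :
    G.val I u = if h : G.IsLeaf u then I (.inl ⟨u, h⟩)
      else I (.inr ⟨⟨u, h⟩, fun v => G.val I v.1⟩) := by
  rw [val, WellFounded.fix_eq]

theorem val_congr {I I' : G.Var k → Fin k} (u : Fin G.n)
    (h : ∀ x, ReflTransGen G.child (nodeOf x) u → I x = I' x) :
    G.val I u = G.val I' u := by
  induction u using G.wf.induction with
  | _ u ih =>
    have hchildren : (fun v : {v // G.child v u} => G.val I v.1) = fun v => G.val I' v.1 :=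
      funext fun v => ih v.1 v.2 fun x hx => h x (hx.tail v.2)
    rw [val_eq, val_eq]
    split_ifs
    · exact h _ .refl
    · rw [hchildren]
      exact h _ .refl

variable (hk : 0 < k)

noncomputable def hardInput (ν : Fin G.n → Fin k) : G.Var k → Fin k
  | .inl u => ν u.1
  | .inr q => if q.2 = (fun v => ν v.1) then ν q.1.1 else ⟨0, hk⟩

theorem val_hardInput (ν : Fin G.n → Fin k) : G.val (hardInput hk ν) = ν := by
  funext u
  induction u using G.wf.induction with
  | _ u ih =>
    rw [val_eq]
    split_ifs with hu
    · rfl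
    · exact if_pos (funext fun v : {v // G.child v u} => ih v.1 v.2)

theorem hardInput_mem_hardInputs (ν : Fin G.n → Fin k) : hardInput hk ν ∈ G.HardInputs hk := by
  intro u a ha
  refine if_neg fun h => ha ?_
  rw [val_hardInput]
  exact h

noncomputable def thriftyVar (ν : Fin G.n → Fin k) (u : Fin G.n) : G.Var k :=
  if h : G.IsLeaf u then .inl ⟨u, h⟩ else .inr ⟨⟨u, h⟩, fun v => ν v.1⟩

theorem thriftyVar_of_isLeaf (ν : Fin G.n → Fin k) {u : Fin G.n} (h : G.IsLeaf u) :
    G.thriftyVar ν u = .inl ⟨u, h⟩ := dif_pos h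

theorem thriftyVar_of_not_isLeaf (ν : Fin G.n → Fin k) {u : Fin G.n} (h : ¬ G.IsLeaf u) :
    G.thriftyVar ν u = .inr ⟨⟨u, h⟩, fun v => ν v.1⟩ := dif_neg h

theorem nodeOf_thriftyVar (ν : Fin G.n → Fin k) (u : Fin G.n) :
    nodeOf (G.thriftyVar ν u) = u := by
  by_cases h : G.IsLeaf u
  · rw [thriftyVar_of_isLeaf ν h]; rfl
  · rw [thriftyVar_of_not_isLeaf ν h]; rfl

variable {hk}

theorem val_update_thriftyVar_of_not_reflTransGen (ν : Fin G.n → Fin k) {v w : Fin G.n}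
    (h : ¬ ReflTransGen G.child v w) (y : Fin k) :
    G.val (update (hardInput hk ν) (G.thriftyVar ν v) y) w = ν w := by
  conv_rhs => rw [← val_hardInput hk ν]
  refine val_congr w fun x hx => update_of_ne ?_ _ _
  rintro rfl
  exact h (nodeOf_thriftyVar ν v ▸ hx)

theorem val_update_thriftyVar_self (ν : Fin G.n → Fin k) (v : Fin G.n) (y : Fin k) :
    G.val (update (hardInput hk ν) (G.thriftyVar ν v) y) v = y := by
  have hchildren : (fun w : {w // G.child w v} =>
      G.val (update (hardInput hk ν) (G.thriftyVar ν v) y) w.1) = fun w => ν w.1 :=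
    funext fun w =>
      val_update_thriftyVar_of_not_reflTransGen ν (fun h => G.not_child_of_reflTransGen h w.2) y
  rw [val_eq]
  split_ifs with hv
  · rw [← thriftyVar_of_isLeaf ν hv, update_self]
  · rw [hchildren, ← thriftyVar_of_not_isLeaf ν hv, update_self]

theorem update_thriftyVar_root_mem_hardInputs (ν : Fin G.n → Fin k) (y : Fin k) :
    update (hardInput hk ν) (G.thriftyVar ν G.root) y ∈ G.HardInputs hk := by
  intro u a ha
  have hval : ∀ w : {w // G.child w u.1},
      G.val (update (hardInput hk ν) (G.thriftyVar ν G.root) y) w.1 = ν w.1 := by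
    refine fun w => val_update_thriftyVar_of_not_reflTransGen ν (fun hr => ?_) y
    rcases hr.cases_head with h | ⟨d, hd, _⟩
    · exact G.root_no_parent u.1 (h ▸ w.2)
    · exact G.root_no_parent d hd
  have hne : a ≠ fun v => ν v.1 := fun h => ha (funext fun v => by rw [h, hval])
  refine (update_of_ne ?_ _ _).trans (if_neg hne)
  by_cases hroot : G.IsLeaf G.root
  · rw [thriftyVar_of_isLeaf ν hroot]
    exact Sum.inr_ne_inl
  · rw [thriftyVar_of_not_isLeaf ν hroot]
    intro h
    cases h
    exact hne rfl

end RootedDag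

open RootedDag

structure ThriftySolver where
  G : RootedDag
  two_le_n : 2 ≤ G.n
  k : ℕ
  two_le_k : 2 ≤ k
  B : BP (G.Var k) k Bool
  solves : G.SolvesDEOn (by omega) B (G.HardInputs (by omega))
  thrifty : G.Thrifty B

namespace ThriftySolver

variable (c : ThriftySolver)

theorem k_pos : 0 < c.k := by
  have := c.two_le_k
  omega

variable {c}

variable (c) in
def toggle (x : Fin c.k) : Fin c.k :=
  if x = ⟨0, c.k_pos⟩ then ⟨1, c.two_le_k⟩ else ⟨0, c.k_pos⟩

theorem toggle_eq_zero_iff (x : Fin c.k) : c.toggle x = ⟨0, c.k_pos⟩ ↔ x ≠ ⟨0, c.k_pos⟩ := by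
  unfold toggle
  split_ifs <;> simp_all [Fin.ext_iff]

theorem toggle_ne (x : Fin c.k) : c.toggle x ≠ x := fun h => by
  have := toggle_eq_zero_iff x
  rw [h] at this
  tauto

variable (c) in
noncomputable abbrev input (ν : Fin c.G.n → Fin c.k) : c.G.Var c.k → Fin c.k :=
  hardInput c.k_pos ν

variable (c) in
noncomputable def state (ν : Fin c.G.n → Fin c.k) (t : ℕ) : c.B.State := c.B.path (c.input ν) t

variable (c) in
noncomputable def node (ν : Fin c.G.n → Fin c.k) (t : ℕ) : Fin c.G.n :=
  nodeOf (c.B.query (c.state ν t))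

theorem val_input (ν : Fin c.G.n → Fin c.k) : c.G.val (c.input ν) = ν := val_hardInput _ ν

theorem exists_halt (ν : Fin c.G.n → Fin c.k) : ∃ t, c.B.VisitsAt (c.input ν) t ∧
    c.B.out (c.state ν t) = some (decide (ν c.G.root = ⟨0, c.k_pos⟩)) := by
  have := c.solves (c.input ν) (hardInput_mem_hardInputs c.k_pos ν)
  rwa [val_input] at this

variable (c) in
noncomputable def haltTime (ν : Fin c.G.n → Fin c.k) : ℕ := (exists_halt ν).choose

theorem visitsAt_haltTime (ν : Fin c.G.n → Fin c.k) : c.B.VisitsAt (c.input ν) (c.haltTime ν) :=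
  (exists_halt ν).choose_spec.1

theorem out_haltTime (ν : Fin c.G.n → Fin c.k) :
    c.B.out (c.state ν (c.haltTime ν)) = some (decide (ν c.G.root = ⟨0, c.k_pos⟩)) :=
  (exists_halt ν).choose_spec.2

theorem out_state_of_lt_haltTime {ν : Fin c.G.n → Fin c.k} {t : ℕ} (ht : t < c.haltTime ν) :
    c.B.out (c.state ν t) = none :=
  visitsAt_haltTime ν t ht

theorem visits_state {ν : Fin c.G.n → Fin c.k} {t : ℕ} (ht : t ≤ c.haltTime ν) :
    c.B.Visits (c.input ν) (c.state ν t) :=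
  ⟨t, (visitsAt_haltTime ν).mono ht, rfl⟩

theorem state_succ {ν : Fin c.G.n → Fin c.k} {t : ℕ} (ht : t ≤ c.haltTime ν) :
    c.state ν (t + 1) = c.B.next (c.state ν t) (ν (c.node ν t)) := by
  have hanswer : c.input ν (c.B.query (c.state ν t)) = ν (c.node ν t) := by
    unfold node
    cases hq : c.B.query (c.state ν t) with
    | inl u => rfl
    | inr q =>
      have hthrifty := c.thrifty (c.input ν) _ q.1 q.2 (visits_state ht) hq
      refine if_pos (funext fun v => ?_)
      rw [hthrifty v, val_input]
  rw [← hanswer]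
  rfl

theorem state_update_of_forall_node_ne {ν : Fin c.G.n → Fin c.k} {v : Fin c.G.n} {t : ℕ}
    (h : ∀ s < t, c.node ν s ≠ v) (y : Fin c.k) :
    ∀ s ≤ t, c.B.path (update (c.input ν) (c.G.thriftyVar ν v) y) s = c.state ν s :=
  BP.path_update_of_forall_ne fun s hs hq => h s hs <| by
    rw [node, state, hq, nodeOf_thriftyVar]

theorem visitsAt_update_of_forall_node_ne {ν : Fin c.G.n → Fin c.k} {v : Fin c.G.n} {t : ℕ}
    (h : ∀ s < t, c.node ν s ≠ v) (y : Fin c.k) (ht : t ≤ c.haltTime ν) :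
    c.B.VisitsAt (update (c.input ν) (c.G.thriftyVar ν v) y) t :=
  ((visitsAt_haltTime ν).mono ht).update_of_forall_ne fun s hs hq => h s hs <| by
    rw [node, state, hq, nodeOf_thriftyVar]

variable (c) in
def Reads (ν : Fin c.G.n → Fin c.k) (v : Fin c.G.n) (t : ℕ) : Prop :=
  t < c.haltTime ν ∧ c.node ν t = v

variable (c) in
def Needs (ν : Fin c.G.n → Fin c.k) (v : Fin c.G.n) (t : ℕ) : Prop :=
  t < c.haltTime ν ∧ c.G.child v (c.node ν t)

/-- Otherwise changing the child's variable would leave the run unchanged but, by thriftiness,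
change the tuple that is queried. -/
theorem Needs.exists_reads {ν : Fin c.G.n → Fin c.k} {v : Fin c.G.n} {t : ℕ}
    (hn : c.Needs ν v t) : ∃ s < t, c.Reads ν v s := by
  by_contra! hno
  have hne : ∀ s < t, c.node ν s ≠ v := fun s hs hv => hno s hs ⟨hs.trans hn.1, hv⟩
  obtain ⟨htv, hchild⟩ := hn
  have hsame := state_update_of_forall_node_ne hne (c.toggle (ν v)) t le_rfl
  have hvis' : c.B.Visits (update (c.input ν) (c.G.thriftyVar ν v) (c.toggle (ν v)))
      (c.state ν t) :=
    ⟨t, visitsAt_update_of_forall_node_ne hne _ htv.le, hsame⟩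
  unfold node at hchild
  cases hq : c.B.query (c.state ν t) with
  | inl u => exact u.2 v (by rwa [hq] at hchild)
  | inr q =>
    replace hchild : c.G.child v q.1.1 := by rwa [hq] at hchild
    have h₁ := c.thrifty _ _ q.1 q.2 (visits_state htv.le) hq ⟨v, hchild⟩
    have h₂ := c.thrifty _ _ q.1 q.2 hvis' hq ⟨v, hchild⟩
    rw [val_input] at h₁
    rw [h₁, val_update_thriftyVar_self] at h₂
    exact toggle_ne _ h₂.symm

/-- Otherwise toggling the root's variable keeps the input hard and the run unchanged, but
changes the correct answer. -/
theorem exists_reads_root (ν : Fin c.G.n → Fin c.k) : ∃ s, c.Reads ν c.G.root s := by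
  by_contra! hno
  have hne : ∀ s < c.haltTime ν, c.node ν s ≠ c.G.root := fun s hs hv => hno s ⟨hs, hv⟩
  set y := c.toggle (ν c.G.root)
  have hsame := state_update_of_forall_node_ne hne y _ le_rfl
  obtain ⟨t, hvis, hout⟩ := c.solves _ (update_thriftyVar_root_mem_hardInputs ν y)
  have hout' := out_haltTime ν
  rw [← hsame] at hout'
  obtain rfl := BP.eq_of_visitsAt_of_out_eq_some hvis hout
    (visitsAt_update_of_forall_node_ne hne y le_rfl) hout'
  rw [hout', val_update_thriftyVar_self, Option.some_inj, decide_eq_decide,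
    toggle_eq_zero_iff] at hout
  tauto

variable (c) in
noncomputable def pebbles (ν : Fin c.G.n → Fin c.k) (t : ℕ) : Finset (Fin c.G.n) :=
  Finset.univ.filter fun v => ∃ r, t ≤ r ∧ c.Needs ν v r ∧ ∀ s, t ≤ s → s < r → ¬ c.Reads ν v s

theorem mem_pebbles {ν : Fin c.G.n → Fin c.k} {t : ℕ} {v : Fin c.G.n} :
    v ∈ c.pebbles ν t ↔ ∃ r, t ≤ r ∧ c.Needs ν v r ∧ ∀ s, t ≤ s → s < r → ¬ c.Reads ν v s := by
  simp [pebbles]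

theorem pebbles_zero (ν : Fin c.G.n → Fin c.k) : c.pebbles ν 0 = ∅ := by
  refine Finset.eq_empty_of_forall_notMem fun v hv => ?_
  obtain ⟨r, -, hneed, hnoread⟩ := mem_pebbles.mp hv
  obtain ⟨s, hs, hread⟩ := hneed.exists_reads
  exact hnoread s s.zero_le hs hread

theorem pebbles_succ (ν : Fin c.G.n → Fin c.k) (t : ℕ) :
    PebMove c.G.child (c.pebbles ν t) (c.pebbles ν (t + 1)) ∨
      c.pebbles ν (t + 1) ⊆ c.pebbles ν t := by
  set u := c.node ν t
  have hadded : ∀ v ∈ c.pebbles ν (t + 1), v ∉ c.pebbles ν t → v = u := by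
    intro v hv hv₀
    obtain ⟨r, hr, hneed, hnoread⟩ := mem_pebbles.mp hv
    by_contra hvu
    refine hv₀ (mem_pebbles.mpr ⟨r, by omega, hneed, fun s hs hsr hread => ?_⟩)
    rcases hs.eq_or_lt with rfl | hs
    · exact hvu hread.2.symm
    · exact hnoread s hs hsr hread
  have hremoved : ∀ v ∈ c.pebbles ν t, v ∉ c.pebbles ν (t + 1) → c.Needs ν v t := by
    intro v hv hv₁
    obtain ⟨r, hr, hneed, hnoread⟩ := mem_pebbles.mp hv
    rcases hr.eq_or_lt with rfl | hr
    · exact hneed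
    · exact absurd (mem_pebbles.mpr ⟨r, hr, hneed, fun s hs => hnoread s (by omega)⟩) hv₁
  by_cases hu : u ∈ c.pebbles ν (t + 1)
  · obtain ⟨r, hr, hneed, -⟩ := mem_pebbles.mp hu
    refine .inl (.inl ⟨u, c.pebbles ν t \ c.pebbles ν (t + 1), fun v hv => ?_, fun v hv => ?_, ?_⟩)
    · exact mem_pebbles.mpr ⟨t, le_rfl, ⟨by have := hneed.1; omega, hv⟩, by omega⟩
    · rw [Finset.mem_sdiff] at hv
      exact (hremoved v hv.1 hv.2).2
    · ext v
      simp only [Finset.mem_insert, Finset.mem_sdiff]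
      constructor
      · intro hv
        by_cases hv₀ : v ∈ c.pebbles ν t
        · exact .inr ⟨hv₀, fun h => h.2 hv⟩
        · exact .inl (hadded v hv hv₀)
      · rintro (rfl | ⟨hv₀, hv₁⟩)
        · exact hu
        · by_contra hv
          exact hv₁ ⟨hv₀, hv⟩
  · exact .inr fun v hv => by_contra fun hv₀ => hu (hadded v hv hv₀ ▸ hv)

variable (c) in
noncomputable def rootReadTime (ν : Fin c.G.n → Fin c.k) : ℕ := (exists_reads_root ν).choose

theorem reads_rootReadTime (ν : Fin c.G.n → Fin c.k) :
    c.Reads ν c.G.root (c.rootReadTime ν) :=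
  (exists_reads_root ν).choose_spec

theorem child_root_mem_pebbles_rootReadTime (ν : Fin c.G.n → Fin c.k) {v : Fin c.G.n}
    (hv : c.G.child v c.G.root) : v ∈ c.pebbles ν (c.rootReadTime ν) := by
  obtain ⟨hlt, hroot⟩ := reads_rootReadTime ν
  exact mem_pebbles.mpr ⟨_, le_rfl, ⟨hlt, hroot ▸ hv⟩, by omega⟩

theorem exists_critTime (ν : Fin c.G.n → Fin c.k) : ∃ t ≤ c.rootReadTime ν,
    ∀ s ≤ c.rootReadTime ν, (c.pebbles ν s).card ≤ (c.pebbles ν t).card := by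
  obtain ⟨t, ht, hmax⟩ := (Finset.range (c.rootReadTime ν + 1)).exists_max_image
    (fun t => (c.pebbles ν t).card) ⟨0, by simp⟩
  exact ⟨t, Nat.lt_succ_iff.mp (Finset.mem_range.mp ht),
    fun s hs => hmax s (Finset.mem_range.mpr (Nat.lt_succ_of_le hs))⟩

variable (c) in
noncomputable def critTime (ν : Fin c.G.n → Fin c.k) : ℕ := (exists_critTime ν).choose

theorem critTime_le (ν : Fin c.G.n → Fin c.k) : c.critTime ν ≤ c.rootReadTime ν :=
  (exists_critTime ν).choose_spec.1

theorem card_pebbles_le_critTime (ν : Fin c.G.n → Fin c.k) {t : ℕ}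
    (ht : t ≤ c.rootReadTime ν) : (c.pebbles ν t).card ≤ (c.pebbles ν (c.critTime ν)).card :=
  (exists_critTime ν).choose_spec.2 t ht

theorem critTime_lt_haltTime (ν : Fin c.G.n → Fin c.k) : c.critTime ν < c.haltTime ν :=
  (critTime_le ν).trans_lt (reads_rootReadTime ν).1

/-- The pebble sets up to the root's read, followed by the move that pebbles the root, form a
pebbling of `G`. -/
theorem pebCost_le_card_pebbles (ν : Fin c.G.n → Fin c.k) :
    pebCost (Fin c.G.n) c.G.child c.G.root ≤ (c.pebbles ν (c.critTime ν)).card := by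
  set r := c.rootReadTime ν
  set P := c.pebbles ν r
  set S := P.filter (c.G.child · c.G.root)
  have hfinal : (insert c.G.root (P \ S)).card ≤ P.card := by
    obtain ⟨v, hv⟩ := c.G.exists_child_root c.two_le_n
    have hvS : v ∈ S := Finset.mem_filter.mpr ⟨child_root_mem_pebbles_rootReadTime ν hv, hv⟩
    have hlt : (P \ S).card < P.card :=
      Finset.card_lt_card (Finset.sdiff_ssubset (Finset.filter_subset _ _) ⟨v, hvS⟩)
    have := Finset.card_insert_le c.G.root (P \ S)
    omega
  refine pebCost_le_of_moves c.G.root (fun t => if t ≤ r then c.pebbles ν t else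
    insert c.G.root (P \ S)) (r + 1) (by simp [pebbles_zero]) (by simp) (fun t ht => ?_)
    (fun t ht => ?_)
  · rcases Nat.lt_or_ge t r with htr | htr
    · simpa [htr.le, Nat.succ_le_of_lt htr] using pebbles_succ ν t
    · obtain rfl : t = r := by omega
      simp only [le_refl, if_true, Nat.not_succ_le_self, if_false]
      exact .inl (.inl ⟨c.G.root, S, fun v hv => child_root_mem_pebbles_rootReadTime ν hv,
        fun v hv => (Finset.mem_filter.mp hv).2, rfl⟩)
  · split_ifs with htr
    · exact card_pebbles_le_critTime ν htr
    · exact hfinal.trans (card_pebbles_le_critTime ν le_rfl)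

theorem val_eq_of_state_eq {ν ν' : Fin c.G.n → Fin c.k} {t t' : ℕ} (ht : t ≤ c.haltTime ν)
    (ht' : t' ≤ c.haltTime ν') (hstate : c.state ν t = c.state ν' t') {v : Fin c.G.n}
    (hv : c.G.child v (c.node ν t)) : ν v = ν' v := by
  unfold node at hv
  cases hq : c.B.query (c.state ν t) with
  | inl u => exact absurd (by rwa [hq] at hv) (u.2 v)
  | inr q =>
    replace hv : c.G.child v q.1.1 := by rwa [hq] at hv
    have h₁ := c.thrifty _ _ q.1 q.2 (visits_state ht) hq ⟨v, hv⟩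
    have h₂ := c.thrifty _ _ q.1 q.2 (visits_state ht') (hstate ▸ hq) ⟨v, hv⟩
    rw [val_input] at h₁ h₂
    exact h₁.symm.trans h₂

variable (c) in
noncomputable def remaining (ν : Fin c.G.n → Fin c.k) : ℕ := c.haltTime ν - c.critTime ν

theorem critTime_add_remaining (ν : Fin c.G.n → Fin c.k) :
    c.critTime ν + c.remaining ν = c.haltTime ν := by
  have := critTime_lt_haltTime ν
  unfold remaining
  omega

variable (c) in
def ReadsAfter (ν : Fin c.G.n → Fin c.k) (v : Fin c.G.n) (j : ℕ) : Prop :=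
  j < c.remaining ν ∧ c.node ν (c.critTime ν + j) = v

variable (c) in
def NeedsAfter (ν : Fin c.G.n → Fin c.k) (v : Fin c.G.n) (j : ℕ) : Prop :=
  j < c.remaining ν ∧ c.G.child v (c.node ν (c.critTime ν + j))

theorem mem_pebbles_critTime {ν : Fin c.G.n → Fin c.k} {v : Fin c.G.n} :
    v ∈ c.pebbles ν (c.critTime ν) ↔
      ∃ j, c.NeedsAfter ν v j ∧ ∀ i < j, ¬ c.ReadsAfter ν v i := by
  have h := critTime_add_remaining ν
  rw [mem_pebbles]
  constructor
  · rintro ⟨r, hr, ⟨hrh, hneed⟩, hnoread⟩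
    refine ⟨r - c.critTime ν, ⟨by omega, by rwa [Nat.add_sub_cancel' hr]⟩, ?_⟩
    exact fun i hi ⟨hir, hread⟩ => hnoread _ (by omega) (by omega) ⟨by omega, hread⟩
  · rintro ⟨j, ⟨hj, hneed⟩, hnoread⟩
    refine ⟨c.critTime ν + j, by omega, ⟨by omega, hneed⟩, fun s hs hsj ⟨hsh, hread⟩ => ?_⟩
    exact hnoread (s - c.critTime ν) (by omega) ⟨by omega, by rwa [Nat.add_sub_cancel' hs]⟩

variable (c) in
def AgreeUpTo (ν ν' : Fin c.G.n → Fin c.k) (m : ℕ) : Prop :=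
  ∀ i ≤ m, c.state ν (c.critTime ν + i) = c.state ν' (c.critTime ν' + i)

section Agree

variable {ν ν' : Fin c.G.n → Fin c.k} {m : ℕ}

theorem AgreeUpTo.symm (h : c.AgreeUpTo ν ν' m) : c.AgreeUpTo ν' ν m :=
  fun i hi => (h i hi).symm

theorem AgreeUpTo.mono (h : c.AgreeUpTo ν ν' m) {m' : ℕ} (hm : m' ≤ m) : c.AgreeUpTo ν ν' m' :=
  fun i hi => h i (hi.trans hm)

theorem AgreeUpTo.node_eq (h : c.AgreeUpTo ν ν' m) {i : ℕ} (hi : i ≤ m) :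
    c.node ν (c.critTime ν + i) = c.node ν' (c.critTime ν' + i) := by
  rw [node, node, h i hi]

theorem ReadsAfter.of_agreeUpTo (h : c.AgreeUpTo ν ν' m) {v : Fin c.G.n} {j : ℕ}
    (hj : j ≤ m) (hj' : j < c.remaining ν') (hread : c.ReadsAfter ν v j) :
    c.ReadsAfter ν' v j :=
  ⟨hj', (h.node_eq hj).symm.trans hread.2⟩

theorem NeedsAfter.of_agreeUpTo (h : c.AgreeUpTo ν ν' m) {v : Fin c.G.n} {j : ℕ}
    (hj : j ≤ m) (hj' : j < c.remaining ν') (hneed : c.NeedsAfter ν v j) :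
    c.NeedsAfter ν' v j :=
  ⟨hj', h.node_eq hj ▸ hneed.2⟩

/-- The tuple of the query that needs the node records its value. -/
theorem NeedsAfter.val_eq (h : c.AgreeUpTo ν ν' m) {v : Fin c.G.n} {j : ℕ}
    (hj : j ≤ m) (hj' : j < c.remaining ν') (hneed : c.NeedsAfter ν v j) : ν v = ν' v := by
  have := critTime_add_remaining ν
  have := critTime_add_remaining ν'
  have := hneed.1
  exact val_eq_of_state_eq (by omega) (by omega) (h j hj) hneed.2

theorem mem_pebbles_critTime_of_agreeUpTo (h : c.AgreeUpTo ν ν' m) {v : Fin c.G.n} {j : ℕ}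
    (hj : j ≤ m) (hj' : j < c.remaining ν') (hneed : c.NeedsAfter ν v j)
    (hnoread : ∀ i < j, ¬ c.ReadsAfter ν v i) : v ∈ c.pebbles ν' (c.critTime ν') :=
  mem_pebbles_critTime.mpr ⟨j, hneed.of_agreeUpTo h hj hj', fun i hi hread =>
    hnoread i hi (hread.of_agreeUpTo h.symm (by omega) (hi.trans hneed.1))⟩

end Agree

variable (c) in
noncomputable def readIndex (ν : Fin c.G.n → Fin c.k) (v : Fin c.G.n) : ℕ :=
  sInf {j | c.ReadsAfter ν v j ∨ j = c.remaining ν}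

theorem readIndex_le_remaining (ν : Fin c.G.n → Fin c.k) (v : Fin c.G.n) :
    c.readIndex ν v ≤ c.remaining ν :=
  Nat.sInf_le (.inr rfl)

section ReadIndex

variable {ν ν' : Fin c.G.n → Fin c.k} {v : Fin c.G.n}

theorem ReadsAfter.readIndex_le {j : ℕ} (hread : c.ReadsAfter ν v j) : c.readIndex ν v ≤ j :=
  Nat.sInf_le (.inl hread)

theorem readsAfter_readIndex (h : c.readIndex ν v < c.remaining ν) :
    c.ReadsAfter ν v (c.readIndex ν v) :=
  (Nat.sInf_mem (s := {j | c.ReadsAfter ν v j ∨ j = c.remaining ν}) ⟨_, .inr rfl⟩).resolve_right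
    h.ne

theorem NeedsAfter.lt_readIndex {j : ℕ} (hneed : c.NeedsAfter ν v j)
    (hnoread : ∀ i < j, ¬ c.ReadsAfter ν v i) : j < c.readIndex ν v := by
  by_contra! hle
  have hread := readsAfter_readIndex (hle.trans_lt hneed.1)
  rcases hle.lt_or_eq with hlt | heq
  · exact hnoread _ hlt hread
  · subst heq
    have hchild := hneed.2
    rw [hread.2] at hchild
    exact c.G.child_irrefl v hchild

theorem readIndex_eq_of_agreeUpTo {m : ℕ} (h : c.AgreeUpTo ν ν' m) (hv : c.readIndex ν v ≤ m)
    (hm : m < c.remaining ν) (hm' : m < c.remaining ν') :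
    c.readIndex ν' v = c.readIndex ν v := by
  have hread' := (readsAfter_readIndex (hv.trans_lt hm)).of_agreeUpTo h hv (hv.trans_lt hm')
  have hle := hread'.readIndex_le
  have hread := (readsAfter_readIndex (hle.trans_lt (hv.trans_lt hm'))).of_agreeUpTo h.symm
    (hle.trans hv) (hle.trans_lt (hv.trans_lt hm))
  exact hle.antisymm hread.readIndex_le

theorem mem_pebbles_critTime_iff_of_agreeUpTo {m : ℕ} (h : c.AgreeUpTo ν ν' m)
    (hv : c.readIndex ν v ≤ m) (hm : m < c.remaining ν) (hm' : m < c.remaining ν') :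
    v ∈ c.pebbles ν (c.critTime ν) ↔ v ∈ c.pebbles ν' (c.critTime ν') := by
  have hv' : c.readIndex ν' v ≤ m := (readIndex_eq_of_agreeUpTo h hv hm hm').trans_le hv
  constructor
  · intro hpeb
    obtain ⟨j, hneed, hnoread⟩ := mem_pebbles_critTime.mp hpeb
    have := hneed.lt_readIndex hnoread
    exact mem_pebbles_critTime_of_agreeUpTo h (by omega) (by omega) hneed hnoread
  · intro hpeb
    obtain ⟨j, hneed, hnoread⟩ := mem_pebbles_critTime.mp hpeb
    have := hneed.lt_readIndex hnoread
    exact mem_pebbles_critTime_of_agreeUpTo h.symm (by omega) (by omega) hneed hnoread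

end ReadIndex

variable (c) in
noncomputable def readKey (ν : Fin c.G.n → Fin c.k) (v : Fin c.G.n) : ℕ ×ₗ Fin c.G.n :=
  toLex (c.readIndex ν v, v)

variable (c) in
/-- The position of `v` when the nodes without a pebble at the critical time are listed in the
order in which they are first read after it, unread ones last. -/
noncomputable def rank (ν : Fin c.G.n → Fin c.k) (v : Fin c.G.n) : ℕ :=
  ((c.pebbles ν (c.critTime ν))ᶜ.filter fun w => c.readKey ν w < c.readKey ν v).card

section Rank

variable {ν ν' : Fin c.G.n → Fin c.k} {v w : Fin c.G.n}

theorem readIndex_le_of_readKey_lt (h : c.readKey ν w < c.readKey ν v) :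
    c.readIndex ν w ≤ c.readIndex ν v :=
  (Prod.Lex.toLex_lt_toLex'.mp h).1

theorem rank_lt_rank (hv : v ∉ c.pebbles ν (c.critTime ν)) (h : c.readKey ν v < c.readKey ν w) :
    c.rank ν v < c.rank ν w := by
  refine Finset.card_lt_card ⟨fun x hx => ?_, fun hsub => ?_⟩
  · rw [Finset.mem_filter] at hx ⊢
    exact ⟨hx.1, hx.2.trans h⟩
  · have := hsub (Finset.mem_filter.mpr ⟨Finset.mem_compl.mpr hv, h⟩)
    exact lt_irrefl _ (Finset.mem_filter.mp this).2

theorem eq_of_rank_eq (hv : v ∉ c.pebbles ν (c.critTime ν)) (hw : w ∉ c.pebbles ν (c.critTime ν))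
    (h : c.rank ν v = c.rank ν w) : v = w := by
  rcases lt_trichotomy (c.readKey ν v) (c.readKey ν w) with hlt | heq | hlt
  · exact absurd h (rank_lt_rank hv hlt).ne
  · exact congrArg Prod.snd (toLex.injective heq)
  · exact absurd h (rank_lt_rank hw hlt).ne'

theorem rank_lt (hv : v ∉ c.pebbles ν (c.critTime ν)) :
    c.rank ν v < c.G.n - pebCost (Fin c.G.n) c.G.child c.G.root := by
  have hlt : c.rank ν v < (c.pebbles ν (c.critTime ν))ᶜ.card :=
    Finset.card_lt_card ⟨Finset.filter_subset _ _, fun hsub =>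
      lt_irrefl _ (Finset.mem_filter.mp (hsub (Finset.mem_compl.mpr hv))).2⟩
  rw [Finset.card_compl, Fintype.card_fin] at hlt
  have := pebCost_le_card_pebbles ν
  omega

theorem rank_eq_of_agreeUpTo {m : ℕ} (h : c.AgreeUpTo ν ν' m) (hv : c.readIndex ν v ≤ m)
    (hm : m < c.remaining ν) (hm' : m < c.remaining ν') : c.rank ν v = c.rank ν' v := by
  have hv' : c.readIndex ν' v ≤ m := (readIndex_eq_of_agreeUpTo h hv hm hm').trans_le hv
  have hkey : ∀ x, c.readIndex ν x ≤ m → c.readKey ν' x = c.readKey ν x := fun x hx => by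
    rw [readKey, readKey, readIndex_eq_of_agreeUpTo h hx hm hm']
  have hkey' : ∀ x, c.readIndex ν' x ≤ m → c.readKey ν x = c.readKey ν' x := fun x hx => by
    rw [readKey, readKey, readIndex_eq_of_agreeUpTo h.symm hx hm' hm]
  unfold rank
  congr 1
  ext x
  simp only [Finset.mem_filter, Finset.mem_compl]
  constructor
  · rintro ⟨hx, hlt⟩
    have hxm := (readIndex_le_of_readKey_lt hlt).trans hv
    rw [hkey x hxm, hkey v hv, ← mem_pebbles_critTime_iff_of_agreeUpTo h hxm hm hm']
    exact ⟨hx, hlt⟩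
  · rintro ⟨hx, hlt⟩
    have hxm := (readIndex_le_of_readKey_lt hlt).trans hv'
    rw [hkey' x hxm, hkey' v hv', ← mem_pebbles_critTime_iff_of_agreeUpTo h.symm hxm hm' hm]
    exact ⟨hx, hlt⟩

end Rank

variable (c) in
noncomputable def unpebbledValues (ν : Fin c.G.n → Fin c.k)
    (i : Fin (c.G.n - pebCost (Fin c.G.n) c.G.child c.G.root)) : Fin c.k :=
  if h : ∃ v ∉ c.pebbles ν (c.critTime ν), c.rank ν v = i then ν h.choose else ⟨0, c.k_pos⟩

section Decoding

variable {ν ν' : Fin c.G.n → Fin c.k}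

theorem unpebbledValues_rank {v : Fin c.G.n} (hv : v ∉ c.pebbles ν (c.critTime ν)) :
    c.unpebbledValues ν ⟨c.rank ν v, rank_lt hv⟩ = ν v := by
  have h : ∃ w ∉ c.pebbles ν (c.critTime ν), c.rank ν w = c.rank ν v := ⟨v, hv, rfl⟩
  rw [unpebbledValues, dif_pos h]
  obtain ⟨hw, hrank⟩ := h.choose_spec
  rw [eq_of_rank_eq hw hv hrank]

theorem val_eq_of_rank_eq (hL : c.unpebbledValues ν = c.unpebbledValues ν') {v : Fin c.G.n}
    (hv : v ∉ c.pebbles ν (c.critTime ν)) (hv' : v ∉ c.pebbles ν' (c.critTime ν'))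
    (hrank : c.rank ν v = c.rank ν' v) : ν v = ν' v := by
  rw [← unpebbledValues_rank hv, ← unpebbledValues_rank hv', hL]
  simp only [hrank]

/-- Either the node carries a pebble, and the query that needs it records its value, or it is
listed, and the agreeing runs give it the same rank. -/
theorem ReadsAfter.val_eq (hL : c.unpebbledValues ν = c.unpebbledValues ν') {m : ℕ}
    (h : c.AgreeUpTo ν ν' m) {v : Fin c.G.n} (hread : c.ReadsAfter ν v m)
    (hm' : m < c.remaining ν') : ν v = ν' v := by
  have hv := hread.readIndex_le
  by_cases hpeb : v ∈ c.pebbles ν (c.critTime ν)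
  · obtain ⟨j, hneed, hnoread⟩ := mem_pebbles_critTime.mp hpeb
    have := hneed.lt_readIndex hnoread
    exact hneed.val_eq h (by omega) (by omega)
  · exact val_eq_of_rank_eq hL hpeb
      ((mem_pebbles_critTime_iff_of_agreeUpTo h hv hread.1 hm').not.mp hpeb)
      (rank_eq_of_agreeUpTo h hv hread.1 hm')

theorem agreeUpTo_of_state_critTime_eq
    (hq : c.state ν (c.critTime ν) = c.state ν' (c.critTime ν'))
    (hL : c.unpebbledValues ν = c.unpebbledValues ν') :
    ∀ m ≤ c.remaining ν, m ≤ c.remaining ν' → c.AgreeUpTo ν ν' m := by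
  intro m
  induction m with
  | zero => exact fun _ _ i hi => by simpa [Nat.le_zero.mp hi] using hq
  | succ m ih =>
    intro hm hm'
    have h := ih (by omega) (by omega)
    have := critTime_add_remaining ν
    have := critTime_add_remaining ν'
    have hval := (show c.ReadsAfter ν (c.node ν (c.critTime ν + m)) m from ⟨by omega, rfl⟩).val_eq
      hL h (by omega)
    intro i hi
    rcases hi.lt_or_eq with hi | rfl
    · exact h i (by omega)
    rw [← add_assoc, ← add_assoc, state_succ (by omega), state_succ (by omega), hval,
      h.node_eq le_rfl, h m le_rfl]

theorem remaining_le (hq : c.state ν (c.critTime ν) = c.state ν' (c.critTime ν'))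
    (hL : c.unpebbledValues ν = c.unpebbledValues ν') : c.remaining ν' ≤ c.remaining ν := by
  by_contra! hlt
  have h := agreeUpTo_of_state_critTime_eq hq hL _ le_rfl hlt.le
  have hout := out_haltTime ν
  have := critTime_add_remaining ν
  have := critTime_add_remaining ν'
  rw [← critTime_add_remaining ν, h _ le_rfl, out_state_of_lt_haltTime (by omega)] at hout
  cases hout

theorem eq_of_state_critTime_eq (hq : c.state ν (c.critTime ν) = c.state ν' (c.critTime ν'))
    (hL : c.unpebbledValues ν = c.unpebbledValues ν') : ν = ν' := by
  have hR : c.remaining ν = c.remaining ν' :=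
    (remaining_le hq.symm hL.symm).antisymm (remaining_le hq hL)
  have h := agreeUpTo_of_state_critTime_eq hq hL _ le_rfl hR.le
  have hidx : ∀ w, c.readIndex ν' w = c.readIndex ν w := fun w => by
    have := readIndex_le_remaining ν w
    have := readIndex_le_remaining ν' w
    by_cases hw : c.readIndex ν w < c.remaining ν
    · exact readIndex_eq_of_agreeUpTo (h.mono hw.le) le_rfl hw (by omega)
    by_cases hw' : c.readIndex ν' w < c.remaining ν'
    · exact (readIndex_eq_of_agreeUpTo (h.symm.mono (by omega)) le_rfl hw' (by omega)).symm
    omega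
  have hpeb : c.pebbles ν (c.critTime ν) = c.pebbles ν' (c.critTime ν') := by
    ext w
    constructor
    · intro hw
      obtain ⟨j, hneed, hnoread⟩ := mem_pebbles_critTime.mp hw
      exact mem_pebbles_critTime_of_agreeUpTo h hneed.1.le (hR ▸ hneed.1) hneed hnoread
    · intro hw
      obtain ⟨j, hneed, hnoread⟩ := mem_pebbles_critTime.mp hw
      exact mem_pebbles_critTime_of_agreeUpTo h.symm (hR ▸ hneed.1.le) (hR ▸ hneed.1) hneed
        hnoread
  have hrank : ∀ w, c.rank ν w = c.rank ν' w := fun w => by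
    simp only [rank, readKey, hidx, hpeb]
  funext v
  by_cases hv : v ∈ c.pebbles ν (c.critTime ν)
  · obtain ⟨j, hneed, -⟩ := mem_pebbles_critTime.mp hv
    exact hneed.val_eq h hneed.1.le (hR ▸ hneed.1)
  · exact val_eq_of_rank_eq hL hv (hpeb ▸ hv) (hrank v)

end Decoding

variable (c) in
theorem pow_pebCost_le_size :
    c.k ^ pebCost (Fin c.G.n) c.G.child c.G.root ≤ c.B.size := by
  let := c.B.finState
  set p := pebCost (Fin c.G.n) c.G.child c.G.root
  have hinj : Injective fun ν => (c.state ν (c.critTime ν), c.unpebbledValues ν) :=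
    fun ν ν' h => eq_of_state_critTime_eq (Prod.ext_iff.mp h).1 (Prod.ext_iff.mp h).2
  have hcard := Fintype.card_le_of_injective _ hinj
  simp only [Fintype.card_prod, Fintype.card_fun, Fintype.card_fin] at hcard
  have hp : p ≤ c.G.n := by
    let ν₀ : Fin c.G.n → Fin c.k := fun _ => ⟨0, c.k_pos⟩
    have := Finset.card_le_univ (c.pebbles ν₀ (c.critTime ν₀))
    rw [Fintype.card_fin] at this
    exact (pebCost_le_card_pebbles ν₀).trans this
  have hsplit : c.k ^ c.G.n = c.k ^ p * c.k ^ (c.G.n - p) := by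
    rw [← pow_add, Nat.add_sub_cancel' hp]
  rw [hsplit] at hcard
  exact Nat.le_of_mul_le_mul_right hcard (pow_pos c.k_pos _)

end ThriftySolver

/-- Every thrifty deterministic `k`-way branching program that computes `DE^G_k` correctly on
all hard inputs `D_{G,k}` has at least `k^p` states, where `p` is the black pebbling cost of
the connected rooted dag `G` with at least two nodes. -/
theorem stmt11 (G : RootedDag) (hn : 2 ≤ G.n) (k : ℕ) (hk : 2 ≤ k) (p : ℕ)
    (hp : pebCost (Fin G.n) G.child G.root = p)
    (B : BP (G.Var k) k Bool)
    (hsolve : G.SolvesDEOn (by omega) B (G.HardInputs (by omega)))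
    (hthrifty : G.Thrifty B) :
    k ^ p ≤ B.size := by
  subst hp
  exact (ThriftySolver.mk G hn k hk B hsolve hthrifty).pow_pebCost_le_size
end

section
/- Suppose there is a deterministic semantic-incremental m-way branching program of size s computing GEN(m) correctly on all instances T^I arising from the reduction (over all DE^G_k inputs I), where G has in-degree at most 2, n ≥ 2 nodes, and m = 3kn+n+1. Then there is a deterministic thrifty k-way branching program of size at most s solving DE^G_k. -/
/-- A rooted dag in which every internal node has an ordered pair of children (left, right).
`children u = none` means `u` is a leaf; the root is the unique node that is nobody's child. -/
structure BinDag where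
  n : ℕ
  children : Fin n → Option (Fin n × Fin n)
  wf : WellFounded fun v u : Fin n => ∃ c, children u = some c ∧ (v = c.1 ∨ v = c.2)
  root : Fin n
  root_no_parent : ∀ u c, children u = some c → c.1 ≠ root ∧ c.2 ≠ root
  root_unique : ∀ u, u ≠ root → ∃ p c, children p = some c ∧ (u = c.1 ∨ u = c.2)

namespace BinDag

/-- The child relation: `v` is a child of `u`. -/
def childRel (G : BinDag) : Fin G.n → Fin G.n → Prop :=
  fun v u => ∃ c, G.children u = some c ∧ (v = c.1 ∨ v = c.2)

/-- The `DE^G_k` variables for a binary dag: a leaf variable `l_u` for each leaf `u`, and a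
variable `f_u(b₁, b₂)` for each internal node `u` and `b₁, b₂ ∈ [k]`. -/
def Var (G : BinDag) (k : ℕ) : Type :=
  {u : Fin G.n // G.children u = none} ⊕
    (Σ _u : {u : Fin G.n // (G.children u).isSome}, Fin k × Fin k)

/-- The value of each node under input `I`: leaves take their `l` value, and an internal node
applies its function to the values of its two children. -/
noncomputable def val (G : BinDag) {k : ℕ} (I : G.Var k → Fin k) : Fin G.n → Fin k :=
  WellFounded.fix (C := fun _ => Fin k) G.wf fun u ih =>
    match h : G.children u with
    | none => I (Sum.inl ⟨u, h⟩)
    | some c => I (Sum.inr ⟨⟨u, by rw [h]; rfl⟩,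
        (ih c.1 ⟨c, h, Or.inl rfl⟩, ih c.2 ⟨c, h, Or.inr rfl⟩)⟩)

/-- `B` solves `DE^G_k` for a binary dag `G`: on every input it halts and outputs `true` iff
the value of the root is `1` (the first element of `[k]`). -/
def SolvesDE (G : BinDag) {k : ℕ} (hk : 0 < k) (B : BP (G.Var k) k Bool) : Prop :=
  ∀ I : G.Var k → Fin k, ∃ t, B.VisitsAt I t ∧
    B.out (B.path I t) = some (decide (G.val I G.root = ⟨0, hk⟩))

/-- `B` is thrifty: whenever a state querying `f_u(b₁, b₂)` is visited by input `I`, then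
`(b₁, b₂)` is exactly the pair of values of the children of `u` under `I`. -/
def Thrifty (G : BinDag) {k : ℕ} (B : BP (G.Var k) k Bool) : Prop :=
  ∀ (I : G.Var k → Fin k) (q : B.State) (u : {u : Fin G.n // (G.children u).isSome})
    (b : Fin k × Fin k), B.Visits I q → B.query q = Sum.inr ⟨u, b⟩ →
    ∀ c, G.children u.1 = some c → b.1 = G.val I c.1 ∧ b.2 = G.val I c.2

end BinDag

/-- The closure of `{1}` under the binary operation `T` on `[m]` (element `j ∈ [m]` is
represented by the index `j - 1 : Fin m`, so `1` is index `0`). -/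
inductive Generated {m : ℕ} (T : Fin m → Fin m → Fin m) : Fin m → Prop
  | one (h : 0 < m) : Generated T ⟨0, h⟩
  | app {x y : Fin m} : Generated T x → Generated T y → Generated T (T x y)

/-- `B` solves `GEN(m)`: on every instance `T : [m]×[m] → [m]` it halts and outputs `true`
iff `m` (index `m - 1`) is in the closure of `{1}` under `T`. -/
def SolvesGEN {m : ℕ} (hm : 0 < m) (B : BP (Fin m × Fin m) m Bool) : Prop :=
  ∀ T : Fin m × Fin m → Fin m, ∃ t b, B.VisitsAt T t ∧ B.out (B.path T t) = some b ∧
    (b = true ↔ Generated (fun x y => T (x, y)) ⟨m - 1, Nat.sub_lt hm one_pos⟩)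

/-- `B` is semantic-incremental: for every state `q` querying variable `(x, y)` and every
input `T` whose computation path visits `q`, each of `x`, `y` is either `1` (index `0`) or
labels an earlier edge on `T`'s computation path (edge labels are the answers to the queries). -/
def SemIncr {m : ℕ} (B : BP (Fin m × Fin m) m Bool) : Prop :=
  ∀ (T : Fin m × Fin m → Fin m) (t : ℕ), B.VisitsAt T t → B.out (B.path T t) = none →
    ∀ z ∈ ({(B.query (B.path T t)).1, (B.query (B.path T t)).2} : Set (Fin m)),
      (z : ℕ) = 0 ∨ ∃ s < t, T (B.query (B.path T s)) = z

/-- The static data of the reduction from `DE^G_k` to `GEN(m)`, `m = 3kn + n + 1`.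
Element `j ∈ [m]` is represented by the index `j - 1 : Fin m` (so `1` is index `0`); node
`u : Fin n` (i.e., node `u+1 ∈ [n]`) is the element with index `u`.  The leaves are listed in
a fixed order `w 0, …, w (l-1)`.  The elements `{n+2, …, m}` (indices `≥ n+1`) are injectively
assigned names `gN u a` ("node `u` has value `a`") and `gA u s a` ("value `a` flows along the
left (`s = false`) or right (`s = true`) in-arc of `u`"), with `gN root 1 = m` (index `m-1`). -/
structure RedSetup (G : BinDag) (k : ℕ) where
  hn : 2 ≤ G.n
  hk : 2 ≤ k
  hdisj : ∀ u c, G.children u = some c → c.1 ≠ c.2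
  m : ℕ
  hm : m = 3 * k * G.n + G.n + 1
  l : ℕ
  w : Fin l → Fin G.n
  w_leaf : ∀ t, G.children (w t) = none
  w_inj : Function.Injective w
  w_surj : ∀ u, G.children u = none → ∃ t, w t = u
  gN : Fin G.n → Fin k → Fin m
  gA : Fin G.n → Bool → Fin k → Fin m
  g_inj : Function.Injective fun x : (Fin G.n × Fin k) ⊕ (Fin G.n × Bool × Fin k) =>
    match x with
    | .inl (u, a) => gN u a
    | .inr (u, s, a) => gA u s a
  g_range_N : ∀ u a, G.n + 1 ≤ (gN u a : ℕ)
  g_range_A : ∀ u s a, G.n + 1 ≤ (gA u s a : ℕ)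
  g_root : (gN G.root ⟨0, by omega⟩ : ℕ) = m - 1

namespace RedSetup

variable {G : BinDag} {k : ℕ}

theorem m_pos (R : RedSetup G k) : 0 < R.m := R.hm ▸ Nat.succ_pos _

theorem lt_m (R : RedSetup G k) {j : ℕ} (h : j ≤ G.n + 1) : j < R.m := by
  have h1 : 2 * 2 ≤ k * G.n := Nat.mul_le_mul R.hk R.hn
  have h2 : R.m = 3 * (k * G.n) + G.n + 1 := by rw [R.hm, Nat.mul_assoc]
  omega

/-- The element with index `j` of `[m]`. -/
def el (R : RedSetup G k) (j : ℕ) (h : j < R.m) : Fin R.m := ⟨j, h⟩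

/-- The pairs `(x, y)` that are "used", i.e., appear as the left-hand side of one of the
explicit defining equations of `T^I`. -/
def Used (R : RedSetup G k) (x y : Fin R.m) : Prop :=
  ((x : ℕ) = 0 ∧ (y : ℕ) < G.n) ∨
  ((x : ℕ) = 0 ∧ (y : ℕ) = G.n) ∨
  ((x : ℕ) = 0 ∧ ∃ (t : ℕ) (ht : t + 1 < R.l) (a : Fin k),
      y = R.gN (R.w ⟨t, by omega⟩) a) ∨
  (∃ (u : Fin G.n) (c : Fin G.n × Fin G.n) (a : Fin k), G.children u = some c ∧
      (x : ℕ) = (u : ℕ) + 1 ∧ (y = R.gN c.1 a ∨ y = R.gN c.2 a)) ∨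
  (∃ (u : Fin G.n) (c : Fin G.n × Fin G.n) (b₁ b₂ : Fin k), G.children u = some c ∧
      x = R.gA u false b₁ ∧ y = R.gA u true b₂)

/-- `T` is the `GEN(m)` instance `T^I` associated to the `DE^G_k` input `I` by the reduction:
`T(1, u) = u + 1` for `u ∈ [n]`; `T(1, n+1) = gN (w 1) (l_{w 1})`;
`T(1, gN (w t) a) = gN (w (t+1)) (l_{w (t+1)})`; for internal `u` with children `(v₁, v₂)`:
`T(u + 1, gN vᵢ a) = gA u side a` and `T(gA u false b₁, gA u true b₂) = gN u (f_u(b₁, b₂))`;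
all unused variables are set to `1`. -/
def Defines (R : RedSetup G k) (I : G.Var k → Fin k) (T : Fin R.m → Fin R.m → Fin R.m) :
    Prop :=
  (∀ u : Fin G.n, T (R.el 0 R.m_pos) (R.el u (R.lt_m (by omega)))
      = R.el ((u : ℕ) + 1) (R.lt_m (by omega))) ∧
  (∀ h0 : 0 < R.l, T (R.el 0 R.m_pos) (R.el G.n (R.lt_m (by omega)))
      = R.gN (R.w ⟨0, h0⟩) (G.val I (R.w ⟨0, h0⟩))) ∧
  (∀ (t : ℕ) (ht : t + 1 < R.l) (a : Fin k),
      T (R.el 0 R.m_pos) (R.gN (R.w ⟨t, by omega⟩) a)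
        = R.gN (R.w ⟨t + 1, ht⟩) (G.val I (R.w ⟨t + 1, ht⟩))) ∧
  (∀ (u : Fin G.n) (c : Fin G.n × Fin G.n) (a : Fin k), G.children u = some c →
      T (R.el ((u : ℕ) + 1) (R.lt_m (by omega))) (R.gN c.1 a) = R.gA u false a ∧
      T (R.el ((u : ℕ) + 1) (R.lt_m (by omega))) (R.gN c.2 a) = R.gA u true a) ∧
  (∀ (u : Fin G.n) (c : Fin G.n × Fin G.n) (b₁ b₂ : Fin k) (h : G.children u = some c),
      T (R.gA u false b₁) (R.gA u true b₂)
        = R.gN u (I (Sum.inr ⟨⟨u, by rw [h]; rfl⟩, (b₁, b₂)⟩))) ∧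
  (∀ x y, ¬ R.Used x y → T x y = R.el 0 R.m_pos)

end RedSetup

/-!
Every entry of `T^I` is a fixed function of at most one `DE` variable: of a leaf value `l_u`
at the queries `(1, n+1)` and `(1, gN (w t) a)`, of `f_u(b₁, b₂)` at
`(gA u false b₁, gA u true b₂)`, and of nothing elsewhere. So `B` runs on `I` itself by asking
that variable instead, with the same states.

Call an element consistent with `I` if every name `gN u a` or `gA u s a` it carries has `a` the
true value of `u` or of the corresponding child. `T^I` maps consistent pairs to consistent
elements, so everything generated is consistent, and conversely all true node values are
generated bottom-up: hence `m = gN root 1` is generated iff the root has value `1`. By semantic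
incrementality every queried element was produced earlier on the path, hence is consistent; so a
query `(gA u false b₁, gA u true b₂)`, the only one that reads `f_u(b₁, b₂)`, has `(b₁, b₂)`
equal to the values of the children of `u`, which is thriftiness.
-/

namespace BinDag

variable {G : BinDag} {k : ℕ}

theorem val_leaf (I : G.Var k → Fin k) {u : Fin G.n} (h : G.children u = none) :
    G.val I u = I (Sum.inl ⟨u, h⟩) := by
  unfold BinDag.val
  rw [WellFounded.fix_eq]
  split
  · rfl
  · rename_i h'
    exact absurd (h.symm.trans h') (by simp)

theorem val_node (I : G.Var k → Fin k) {u : Fin G.n} {c : Fin G.n × Fin G.n}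
    (h : G.children u = some c) :
    G.val I u = I (Sum.inr ⟨⟨u, by rw [h]; rfl⟩, (G.val I c.1, G.val I c.2)⟩) := by
  conv_lhs => unfold BinDag.val; rw [WellFounded.fix_eq]
  split
  · rename_i h'
    exact absurd (h.symm.trans h') (by simp)
  · rename_i c' h'
    obtain rfl : c' = c := Option.some.inj (h'.symm.trans h)
    rfl

theorem exists_leaf (G : BinDag) (hn : 0 < G.n) : ∃ u, G.children u = none := by
  obtain ⟨u, -, hu⟩ := G.wf.has_min Set.univ ⟨⟨0, hn⟩, trivial⟩
  refine ⟨u, ?_⟩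
  cases h : G.children u with
  | none => rfl
  | some c => exact absurd ⟨c, h, Or.inl rfl⟩ (hu c.1 trivial)

end BinDag

namespace BP

variable {V W Out : Type} {k m : ℕ}

theorem VisitsAt.mono_s15 {B : BP V k Out} {I : V → Fin k} {s t : ℕ} (h : s ≤ t)
    (hv : B.VisitsAt I t) : B.VisitsAt I s :=
  fun r hr => hv r (lt_of_lt_of_le hr h)

theorem visitsAt_succ (B : BP V k Out) (I : V → Fin k) (t : ℕ) :
    B.VisitsAt I (t + 1) ↔ B.VisitsAt I t ∧ B.out (B.path I t) = none := by
  refine ⟨fun h => ⟨h.mono_s15 t.le_succ, h t t.lt_succ_self⟩, fun ⟨h, ht⟩ s hs => ?_⟩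
  rcases Nat.lt_succ_iff_lt_or_eq.mp hs with hs | rfl
  exacts [h s hs, ht]

/-- Output states query the dummy `d` rather than `v` of their label, so that they cannot break
thriftiness. -/
def pullback (B : BP V m Out) (v : V → W) (f : V → Fin k → Fin m) (d : W) : BP W k Out where
  State := B.State
  finState := B.finState
  start := B.start
  query q := if (B.out q).isNone then v (B.query q) else d
  next q a := B.next q (f (B.query q) a)
  out := B.out

variable {B : BP V m Out} {v : V → W} {f : V → Fin k → Fin m} {d : W}
  {I : W → Fin k} {J : V → Fin m}

theorem pullback_out : (B.pullback v f d).out = B.out := rfl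

theorem pullback_path (hJ : ∀ p, J p = f p (I (v p))) :
    ∀ t, B.VisitsAt J t → (B.pullback v f d).path I t = B.path J t
  | 0, _ => rfl
  | t + 1, hv => by
    obtain ⟨hv, hout⟩ := (B.visitsAt_succ J t).1 hv
    have hq : (B.pullback v f d).query (B.path J t) = v (B.query (B.path J t)) := by
      simp [pullback, hout]
    show B.next _ (f _ (I ((B.pullback v f d).query ((B.pullback v f d).path I t)))) =
      B.next _ (J _)
    rw [pullback_path hJ t hv, hq, hJ]

theorem pullback_visitsAt_iff (hJ : ∀ p, J p = f p (I (v p))) :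
    ∀ t, (B.pullback v f d).VisitsAt I t ↔ B.VisitsAt J t
  | 0 => ⟨fun _ _ h => absurd h (Nat.not_lt_zero _), fun _ _ h => absurd h (Nat.not_lt_zero _)⟩
  | t + 1 => by
    rw [visitsAt_succ, visitsAt_succ, pullback_visitsAt_iff hJ t]
    refine and_congr_right fun hv => ?_
    rw [← pullback_path hJ t hv]
    rfl

theorem pullback_query_of_visits (hJ : ∀ p, J p = f p (I (v p))) {q : B.State}
    (hq : (B.pullback v f d).Visits I q) :
    (B.pullback v f d).query q = d ∨ ∃ t, B.VisitsAt J t ∧ B.out (B.path J t) = none ∧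
      (B.pullback v f d).query q = v (B.query (B.path J t)) := by
  obtain ⟨t, hv, rfl⟩ := hq
  rw [pullback_visitsAt_iff hJ] at hv
  rw [pullback_path hJ t hv]
  by_cases hout : B.out (B.path J t) = none
  · exact Or.inr ⟨t, hv, hout, by simp [pullback, hout]⟩
  · exact Or.inl (by simp [pullback, Option.isNone_iff_eq_none, hout])

end BP

theorem SemIncr.query_mem_of_closed {m : ℕ} {B : BP (Fin m × Fin m) m Bool} (hinc : SemIncr B)
    {T : Fin m × Fin m → Fin m} {P : Fin m → Prop} (hone : ∀ z : Fin m, (z : ℕ) = 0 → P z)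
    (hT : ∀ x y, P x → P y → P (T (x, y))) (t : ℕ) (hv : B.VisitsAt T t)
    (hout : B.out (B.path T t) = none) :
    P (B.query (B.path T t)).1 ∧ P (B.query (B.path T t)).2 := by
  induction t using Nat.strong_induction_on with
  | _ t ih =>
    have hmem : ∀ z ∈ ({(B.query (B.path T t)).1, (B.query (B.path T t)).2} : Set (Fin m)),
        P z := by
      intro z hz
      rcases hinc T t hv hout z hz with h | ⟨s, hs, rfl⟩
      · exact hone z h
      · obtain ⟨h₁, h₂⟩ := ih s hs (hv.mono_s15 hs.le) (hv s hs)
        exact hT _ _ h₁ h₂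
    exact ⟨hmem _ (Set.mem_insert _ _), hmem _ (Set.mem_insert_of_mem _ rfl)⟩

namespace RedSetup

variable {G : BinDag} {k : ℕ} (R : RedSetup G k)

theorem gN_inj {u u' : Fin G.n} {a a' : Fin k} (h : R.gN u a = R.gN u' a') :
    u = u' ∧ a = a' :=
  Prod.ext_iff.mp (Sum.inl_injective (R.g_inj (a₁ := .inl (u, a)) (a₂ := .inl (u', a')) h))

theorem gA_inj {u u' : Fin G.n} {s s' : Bool} {a a' : Fin k}
    (h : R.gA u s a = R.gA u' s' a') : u = u' ∧ s = s' ∧ a = a' := by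
  simpa [Prod.ext_iff] using R.g_inj (a₁ := .inr (u, s, a)) (a₂ := .inr (u', s', a')) h

theorem gN_ne_gA (u v : Fin G.n) (a b : Fin k) (s : Bool) : R.gN u a ≠ R.gA v s b :=
  fun h => Sum.inl_ne_inr (R.g_inj (a₁ := .inl (u, a)) (a₂ := .inr (v, s, b)) h)

theorem l_pos : 0 < R.l := by
  obtain ⟨u, hu⟩ := G.exists_leaf (by have := R.hn; omega)
  exact (R.w_surj u hu).choose.pos

def Consistent (I : G.Var k → Fin k) (z : Fin R.m) : Prop :=
  (∀ u a, z = R.gN u a → a = G.val I u) ∧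
    ∀ u c s a, G.children u = some c → z = R.gA u s a → a = G.val I (cond s c.2 c.1)

variable {R} {I : G.Var k → Fin k}

theorem consistent_of_le {z : Fin R.m} (hz : (z : ℕ) ≤ G.n) : R.Consistent I z := by
  refine ⟨fun u a h => ?_, fun u c s a _ h => ?_⟩
  · have := R.g_range_N u a; rw [h] at hz; omega
  · have := R.g_range_A u s a; rw [h] at hz; omega

theorem consistent_gN (u : Fin G.n) : R.Consistent I (R.gN u (G.val I u)) := by
  refine ⟨fun u' a h => ?_, fun u' c s a _ h => absurd h (R.gN_ne_gA _ _ _ _ _)⟩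
  obtain ⟨rfl, rfl⟩ := R.gN_inj h
  rfl

theorem consistent_gA {u : Fin G.n} {c : Fin G.n × Fin G.n} (hc : G.children u = some c)
    (s : Bool) : R.Consistent I (R.gA u s (G.val I (cond s c.2 c.1))) := by
  refine ⟨fun u' a h => absurd h.symm (R.gN_ne_gA _ _ _ _ _), fun u' c' s' a hc' h => ?_⟩
  obtain ⟨rfl, rfl, rfl⟩ := R.gA_inj h
  obtain rfl : c = c' := Option.some.inj (hc.symm.trans hc')
  rfl

variable {T : Fin R.m × Fin R.m → Fin R.m}

theorem Defines.consistent_apply (hT : R.Defines I fun x y => T (x, y)) {x y : Fin R.m}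
    (hx : R.Consistent I x) (hy : R.Consistent I y) : R.Consistent I (T (x, y)) := by
  obtain ⟨hsucc, hfirst, hnext, harc, hnode, hunused⟩ := hT
  beta_reduce at hsucc hfirst hnext harc hnode hunused
  by_cases hxy : R.Used x y
  swap
  · rw [hunused x y hxy]
    exact consistent_of_le (Nat.zero_le _)
  rcases hxy with ⟨hx0, hyn⟩ | ⟨hx0, hyn⟩ | ⟨hx0, t, ht, a, rfl⟩ | ⟨u, c, a, hc, hxu, hyc⟩ |
    ⟨u, c, b₁, b₂, hc, rfl, rfl⟩
  · obtain rfl : x = R.el 0 R.m_pos := Fin.ext hx0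
    have e : T (_, y) = _ := hsucc ⟨y, hyn⟩
    exact e ▸ consistent_of_le (Nat.succ_le_of_lt hyn)
  · obtain rfl : x = R.el 0 R.m_pos := Fin.ext hx0
    obtain rfl : y = R.el G.n (R.lt_m (Nat.le_succ _)) := Fin.ext hyn
    exact hfirst R.l_pos ▸ consistent_gN _
  · obtain rfl : x = R.el 0 R.m_pos := Fin.ext hx0
    exact hnext t ht a ▸ consistent_gN _
  · obtain rfl : x = R.el ((u : ℕ) + 1) (R.lt_m (Nat.succ_le_succ u.2.le)) := Fin.ext hxu
    rcases hyc with rfl | rfl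
    · obtain rfl := hy.1 _ a rfl
      exact (harc u c _ hc).1 ▸ consistent_gA hc false
    · obtain rfl := hy.1 _ a rfl
      exact (harc u c _ hc).2 ▸ consistent_gA hc true
  · obtain rfl : b₁ = G.val I c.1 := hx.2 u c false b₁ hc rfl
    obtain rfl : b₂ = G.val I c.2 := hy.2 u c true b₂ hc rfl
    rw [hnode u c _ _ hc, ← G.val_node I hc]
    exact consistent_gN u

theorem Defines.consistent_of_generated (hT : R.Defines I fun x y => T (x, y)) {z : Fin R.m}
    (hz : Generated (fun x y => T (x, y)) z) : R.Consistent I z := by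
  induction hz with
  | one => exact consistent_of_le (Nat.zero_le _)
  | app _ _ hx hy => exact hT.consistent_apply hx hy

theorem Defines.generated_el (hT : R.Defines I fun x y => T (x, y)) :
    ∀ (j : ℕ) (hj : j ≤ G.n), Generated (fun x y => T (x, y)) (R.el j (R.lt_m (by omega)))
  | 0, _ => .one R.m_pos
  | j + 1, hj => hT.1 ⟨j, hj⟩ ▸ .app (.one R.m_pos) (hT.generated_el j (by omega))

theorem Defines.generated_leaf (hT : R.Defines I fun x y => T (x, y)) :
    ∀ (t : ℕ) (ht : t < R.l),
      Generated (fun x y => T (x, y)) (R.gN (R.w ⟨t, ht⟩) (G.val I (R.w ⟨t, ht⟩)))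
  | 0, ht => hT.2.1 ht ▸ .app (.one R.m_pos) (hT.generated_el G.n le_rfl)
  | t + 1, ht => hT.2.2.1 t ht _ ▸ .app (.one R.m_pos) (hT.generated_leaf t (by omega))

theorem Defines.generated_gN_val (hT : R.Defines I fun x y => T (x, y)) (u : Fin G.n) :
    Generated (fun x y => T (x, y)) (R.gN u (G.val I u)) := by
  induction u using G.wf.induction with
  | _ u ih =>
    cases hc : G.children u with
    | none =>
      obtain ⟨t, rfl⟩ := R.w_surj u hc
      exact hT.generated_leaf t t.2
    | some c =>
      obtain ⟨-, -, -, harc, hnode, -⟩ := id hT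
      beta_reduce at harc hnode
      have gen₁ := Generated.app (hT.generated_el (u + 1) u.2) (ih c.1 ⟨c, hc, Or.inl rfl⟩)
      have gen₂ := Generated.app (hT.generated_el (u + 1) u.2) (ih c.2 ⟨c, hc, Or.inr rfl⟩)
      rw [(harc u c _ hc).1] at gen₁
      rw [(harc u c _ hc).2] at gen₂
      have := Generated.app gen₁ gen₂
      rwa [hnode u c _ _ hc, ← G.val_node I hc] at this

theorem Defines.generated_iff (hT : R.Defines I fun x y => T (x, y)) :
    Generated (fun x y => T (x, y)) ⟨R.m - 1, Nat.sub_lt R.m_pos one_pos⟩ ↔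
      G.val I G.root = ⟨0, R.hk.trans_lt' two_pos⟩ := by
  have hroot : (⟨R.m - 1, Nat.sub_lt R.m_pos one_pos⟩ : Fin R.m) =
      R.gN G.root ⟨0, R.hk.trans_lt' two_pos⟩ := Fin.ext R.g_root.symm
  rw [hroot]
  refine ⟨fun h => ((hT.consistent_of_generated h).1 _ _ rfl).symm, fun h => ?_⟩
  exact h ▸ hT.generated_gN_val G.root

variable (R) in
theorem exists_factor {TT : (G.Var k → Fin k) → Fin R.m × Fin R.m → Fin R.m}
    (hTT : ∀ I, R.Defines I fun x y => TT I (x, y)) (p : Fin R.m × Fin R.m) :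
    ∃ (x : G.Var k) (g : Fin k → Fin R.m), (∀ I, TT I p = g (I x)) ∧
      ∀ u b, x = Sum.inr ⟨u, b⟩ → p = (R.gA u false b.1, R.gA u true b.2) := by
  obtain ⟨x, y⟩ := p
  by_cases hnode : ∃ u c b₁ b₂,
      G.children u = some c ∧ x = R.gA u false b₁ ∧ y = R.gA u true b₂
  · obtain ⟨u, c, b₁, b₂, hc, rfl, rfl⟩ := hnode
    refine ⟨.inr ⟨⟨u, by rw [hc]; rfl⟩, (b₁, b₂)⟩, R.gN u,
      fun I => (hTT I).2.2.2.2.1 u c b₁ b₂ hc, fun u' b h => ?_⟩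
    cases h
    rfl
  suffices ∃ (j : Fin R.l) (g : Fin k → Fin R.m), ∀ I, TT I (x, y) = g (G.val I (R.w j)) by
    obtain ⟨j, g, hg⟩ := this
    exact ⟨.inl ⟨R.w j, R.w_leaf j⟩, g, fun I => (hg I).trans (by rw [G.val_leaf I]),
      fun _ _ h => nomatch h⟩
  by_cases hxy : R.Used x y
  swap
  · exact ⟨⟨0, R.l_pos⟩, fun _ => _, fun I => (hTT I).2.2.2.2.2 x y hxy⟩
  rcases hxy with ⟨hx0, hyn⟩ | ⟨hx0, hyn⟩ | ⟨hx0, t, ht, a, rfl⟩ | ⟨u, c, a, hc, hxu, hyc⟩ |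
    ⟨u, c, b₁, b₂, hc, rfl, rfl⟩
  · obtain rfl : x = R.el 0 R.m_pos := Fin.ext hx0
    exact ⟨⟨0, R.l_pos⟩, fun _ => _, fun I => (hTT I).1 ⟨y, hyn⟩⟩
  · obtain rfl : x = R.el 0 R.m_pos := Fin.ext hx0
    obtain rfl : y = R.el G.n (R.lt_m (Nat.le_succ _)) := Fin.ext hyn
    exact ⟨⟨0, R.l_pos⟩, R.gN _, fun I => (hTT I).2.1 R.l_pos⟩
  · obtain rfl : x = R.el 0 R.m_pos := Fin.ext hx0
    exact ⟨⟨t + 1, ht⟩, R.gN _, fun I => (hTT I).2.2.1 t ht a⟩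
  · obtain rfl : x = R.el ((u : ℕ) + 1) (R.lt_m (Nat.succ_le_succ u.2.le)) := Fin.ext hxu
    rcases hyc with rfl | rfl
    exacts [⟨⟨0, R.l_pos⟩, fun _ => _, fun I => ((hTT I).2.2.2.1 u c a hc).1⟩,
      ⟨⟨0, R.l_pos⟩, fun _ => _, fun I => ((hTT I).2.2.2.1 u c a hc).2⟩]
  · exact absurd ⟨u, c, b₁, b₂, hc, rfl, rfl⟩ hnode

end RedSetup

/-- If there is a deterministic semantic-incremental `m`-way branching program of size `s`
computing `GEN(m)` correctly on all instances `T^I` arising from the reduction, then there is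
a deterministic thrifty `k`-way branching program of size at most `s` solving `DE^G_k`. -/
theorem stmt15 (G : BinDag) (k : ℕ) (R : RedSetup G k)
    (TT : (G.Var k → Fin k) → (Fin R.m × Fin R.m) → Fin R.m)
    (hTT : ∀ I, R.Defines I (fun x y => TT I (x, y)))
    (B : BP (Fin R.m × Fin R.m) R.m Bool) (hinc : SemIncr B)
    (hB : ∀ I : G.Var k → Fin k, ∃ t b, B.VisitsAt (TT I) t ∧
      B.out (B.path (TT I) t) = some b ∧
      (b = true ↔ Generated (fun x y => TT I (x, y)) ⟨R.m - 1, Nat.sub_lt R.m_pos one_pos⟩)) :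
    ∃ B' : BP (G.Var k) k Bool,
      G.SolvesDE (by have := R.hk; omega) B' ∧ G.Thrifty B' ∧ B'.size ≤ B.size := by
  choose v f hvf hv_node using R.exists_factor hTT
  obtain ⟨d, hd⟩ : ∃ d : G.Var k, d.isLeft := ⟨.inl ⟨R.w ⟨0, R.l_pos⟩, R.w_leaf _⟩, rfl⟩
  refine ⟨B.pullback v f d, fun I => ?_, fun I q u b hq hquery c hc => ?_, le_rfl⟩
  · obtain ⟨t, b, hv, hout, hb⟩ := hB I
    refine ⟨t, (B.pullback_visitsAt_iff (hvf · I) t).2 hv, ?_⟩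
    rw [(hTT I).generated_iff] at hb
    rw [B.pullback_path (hvf · I) t hv, BP.pullback_out, hout]
    exact congrArg some (Bool.eq_iff_iff.mpr (by simpa using hb))
  · rcases B.pullback_query_of_visits (hvf · I) hq with hdq | ⟨t, hv, hout, hx⟩
    · rw [← hquery.symm.trans hdq] at hd
      exact absurd hd Bool.false_ne_true
    obtain ⟨hq₁, hq₂⟩ := Prod.ext_iff.mp (hv_node _ u b (hx.symm.trans hquery))
    obtain ⟨hcons₁, hcons₂⟩ := hinc.query_mem_of_closed (P := R.Consistent I)
      (fun _ hz => RedSetup.consistent_of_le (by omega)) (fun _ _ => (hTT I).consistent_apply)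
      t hv hout
    exact ⟨hcons₁.2 u c false b.1 hc hq₁, hcons₂.2 u c true b.2 hc hq₂⟩
end
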